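/- Let a > 0 and let φ : [0,a] → ℝ be a concave, continuous, strictly increasing function with φ(0) = 0 and φ(a) = 1 which is not linear. Let h : [0,a] → ℝ be measurable with |h(t)| ≤ 1 for a.e. t, h not equal to 0 a.e., and suppose ‖1 + h‖_{Λ(φ)} = ‖1 − h‖_{Λ(φ)} = 1. Then 0 < m({t ∈ [0,a] : h(t) > 0}) < a and 0 < m({t ∈ [0,a] : h(t) < 0}) < a. -/

import Mathlib

open MeasureTheory Set Filter Topology
open scoped ENNReal NNReal Classical

noncomputable section

/-- The distribution function `m {s ∈ [0,a] : τ < ‖f s‖}` of `f` on `[0,a]`. -/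
def distrib {E : Type*} [NormedAddCommGroup E] (a : ℝ) (f : ℝ → E) (τ : ℝ) : ℝ≥0∞ :=
  volume {s ∈ Set.Icc (0:ℝ) a | τ < ‖f s‖}

/-- The decreasing rearrangement `f*` of `f` on `[0,a]`:
`f*(t) = inf {τ ≥ 0 : m {s ∈ [0,a] : ‖f s‖ > τ} ≤ t}`. -/
def rearr {E : Type*} [NormedAddCommGroup E] (a : ℝ) (f : ℝ → E) (t : ℝ) : ℝ :=
  sInf {τ : ℝ | 0 ≤ τ ∧ distrib a f τ ≤ ENNReal.ofReal t}

/-- The clamp of `t : ℝ` to the interval `[0,a]`. -/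
def clampIcc (a t : ℝ) : ℝ := min (max t 0) a

lemma clampIcc_mem (a t : ℝ) (ha : 0 ≤ a) : clampIcc a t ∈ Set.Icc (0:ℝ) a :=
  ⟨le_min (le_max_right t 0) ha, min_le_right _ _⟩

lemma clampIcc_mono (a : ℝ) : Monotone (clampIcc a) := fun _ _ hst =>
  min_le_min (max_le_max hst le_rfl) le_rfl

lemma clampIcc_continuous (a : ℝ) : Continuous (clampIcc a) :=
  (continuous_id.max continuous_const).min continuous_const

/-- The Stieltjes integrator associated with an increasing continuous function `φ` on `[0,a]`
(extended to all of `ℝ` as a constant outside `[0,a]`).  Its Lebesgue–Stieltjes measure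
realizes the integrals `∫₀^a ⋯ dφ(t)`. -/
def stieltjesOfOn (φ : ℝ → ℝ) (a : ℝ) : StieltjesFunction ℝ :=
  if h : 0 ≤ a ∧ MonotoneOn φ (Set.Icc 0 a) ∧ ContinuousOn φ (Set.Icc 0 a) then
    { toFun := fun t => φ (clampIcc a t)
      mono' := fun s t hst =>
        h.2.1 (clampIcc_mem a s h.1) (clampIcc_mem a t h.1) (clampIcc_mono a hst)
      right_continuous' := fun t =>
        ((h.2.2.comp_continuous (clampIcc_continuous a)
          (fun x => clampIcc_mem a x h.1)).continuousAt).continuousWithinAt }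
  else StieltjesFunction.id

/-- The Lorentz space functional `‖f‖_{Λ(φ)} = ∫₀^a f*(t) dφ(t)` (with values in `ℝ≥0∞`). -/
def eLorentzNorm {E : Type*} [NormedAddCommGroup E] (φ : ℝ → ℝ) (a : ℝ) (f : ℝ → E) : ℝ≥0∞ :=
  ∫⁻ t in Set.Ioc (0:ℝ) a, ENNReal.ofReal (rearr a f t) ∂(stieltjesOfOn φ a).measure

/-- Membership in the Lorentz space `Λ(φ)[0,a]`. -/
def MemLorentz {E : Type*} [NormedAddCommGroup E] [MeasurableSpace E]
    (φ : ℝ → ℝ) (a : ℝ) (f : ℝ → E) : Prop :=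
  Measurable f ∧ eLorentzNorm φ a f < ⊤

/-- The Hardy–Lorentz space functional
`‖f‖_{H(Λ(φ))} = sup_{0 ≤ r < 1} ‖t ↦ f (r e^{it})‖_{Λ(φ)}` for functions on the unit disk. -/
def eHLNorm (φ : ℝ → ℝ) (f : ℂ → ℂ) : ℝ≥0∞ :=
  ⨆ r ∈ Set.Ico (0:ℝ) 1,
    eLorentzNorm φ (2 * Real.pi)
      (fun t : ℝ => f (Complex.ofReal r * Complex.exp (Complex.I * Complex.ofReal t)))

/-- The classical `H¹` functional `‖f‖_{H¹} = sup_{0 ≤ r < 1} (1/(2π)) ∫₀^{2π} |f(r e^{it})| dt`. -/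
def eH1Norm (f : ℂ → ℂ) : ℝ≥0∞ :=
  ⨆ r ∈ Set.Ico (0:ℝ) 1,
    (ENNReal.ofReal (2 * Real.pi))⁻¹ *
      ∫⁻ t in Set.Ioc (0:ℝ) (2 * Real.pi),
        ENNReal.ofReal ‖f (Complex.ofReal r * Complex.exp (Complex.I * Complex.ofReal t))‖

/-- `fb` is the boundary (radial limit) function of `f`: for a.e. `t ∈ [0,2π]`,
`f(r e^{it}) → fb t` as `r → 1⁻`.  (For `f ∈ H¹` such a function exists and coincides a.e.
with the nontangential limit `f̃`.) -/
def HasRadialLimits (f : ℂ → ℂ) (fb : ℝ → ℂ) : Prop :=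
  ∀ᵐ t ∂(volume.restrict (Set.Icc (0:ℝ) (2 * Real.pi))),
    Filter.Tendsto (fun r : ℝ => f (Complex.ofReal r * Complex.exp (Complex.I * Complex.ofReal t)))
      (nhdsWithin 1 (Set.Iio 1)) (nhds (fb t))

/-- `f` (with boundary function `fb`) is an outer function:
`f` is non-null and `ln |f 0| = (1/(2π)) ∫₀^{2π} ln |fb s| ds`. -/
def IsOuter (f : ℂ → ℂ) (fb : ℝ → ℂ) : Prop :=
  (∃ z ∈ Metric.ball (0:ℂ) 1, f z ≠ 0) ∧
    Real.log ‖f 0‖ =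
      (1 / (2 * Real.pi)) * ∫ s in Set.Ioc (0:ℝ) (2 * Real.pi), Real.log ‖fb s‖

/-- The set `E₊ = {t ∈ [0,a] : h t > 0}`. -/
def posSet (a : ℝ) (h : ℝ → ℝ) : Set ℝ := {t ∈ Set.Icc (0:ℝ) a | 0 < h t}

/-- The set `E₋ = {t ∈ [0,a] : h t < 0}`. -/
def negSet (a : ℝ) (h : ℝ → ℝ) : Set ℝ := {t ∈ Set.Icc (0:ℝ) a | h t < 0}

/-! Concavity and `φ 0 = 0`, `φ a = 1` give `φ t ≥ t / a`, so `dφ` dominates `dt / a` on initial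
segments of `(0, a]`. The superlevel sets of the decreasing function `f*` are such segments and are
at least as large as those of `|f|`, so the layer-cake formula yields `‖f‖₁ ≤ a ‖f‖_{Λ(φ)}`.
Applied to `1 ± h` this gives `a ± ∫ h ≤ a`, i.e. `∫ h = 0`; as `h` is not a.e. zero, `{h > 0}` and
`{h < 0}` both have positive measure, and being disjoint neither fills `[0, a]`. -/

section Rearrangement

variable {E : Type*} [NormedAddCommGroup E] {a : ℝ} {f : ℝ → E}

lemma distrib_eq_restrict (a : ℝ) (f : ℝ → E) (τ : ℝ) :
    distrib a f τ = volume.restrict (Icc 0 a) {s | τ < ‖f s‖} := by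
  rw [Measure.restrict_apply' measurableSet_Icc, inter_comm]
  rfl

lemma distrib_antitone (a : ℝ) (f : ℝ → E) : Antitone (distrib a f) :=
  fun _ _ hτσ => measure_mono fun _ hs => ⟨hs.1, hτσ.trans_lt hs.2⟩

lemma distrib_le_ofReal (a : ℝ) (f : ℝ → E) (τ : ℝ) : distrib a f τ ≤ ENNReal.ofReal a := by
  calc distrib a f τ ≤ volume (Icc 0 a) := measure_mono fun _ hs => hs.1
    _ = ENNReal.ofReal a := by rw [Real.volume_Icc, sub_zero]

lemma exists_gt_lt_distrib {τ : ℝ} {c : ℝ≥0∞} (hc : c < distrib a f τ) :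
    ∃ σ > τ, c < distrib a f σ := by
  obtain ⟨u, hu_anti, hu_gt, hu_lim⟩ := exists_seq_strictAnti_tendsto τ
  have hunion : {s ∈ Icc 0 a | τ < ‖f s‖} = ⋃ n, {s ∈ Icc 0 a | u n < ‖f s‖} := by
    ext s
    simp only [mem_iUnion, mem_sep_iff]
    refine ⟨fun ⟨hs, hτ⟩ => ?_, fun ⟨n, hs, hn⟩ => ⟨hs, (hu_gt n).trans hn⟩⟩
    obtain ⟨n, hn⟩ := (hu_lim.eventually (gt_mem_nhds hτ)).exists
    exact ⟨n, hs, hn⟩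
  have hmono : Monotone fun n => {s ∈ Icc 0 a | u n < ‖f s‖} :=
    fun m n hmn s ⟨hs, hm⟩ => ⟨hs, (hu_anti.antitone hmn).trans_lt hm⟩
  rw [distrib, hunion, hmono.measure_iUnion] at hc
  obtain ⟨n, hn⟩ := lt_iSup_iff.1 hc
  exact ⟨u n, hu_gt n, hn⟩

lemma tendsto_distrib_atTop (hf : AEStronglyMeasurable f (volume.restrict (Icc 0 a))) :
    Tendsto (distrib a f) atTop (𝓝 0) := by
  have hempty : ⋂ τ : ℝ, {s | τ < ‖f s‖} = ∅ :=
    eq_empty_of_forall_notMem fun s hs => lt_irrefl ‖f s‖ (mem_iInter.1 hs _)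
  have hlim := tendsto_measure_iInter_atTop (s := fun τ : ℝ => {s | τ < ‖f s‖})
    (fun _ => nullMeasurableSet_lt aemeasurable_const hf.norm.aemeasurable)
    (fun _ _ hτσ _ hs => hτσ.trans_lt hs) ⟨0, measure_ne_top _ _⟩
  rw [hempty, measure_empty] at hlim
  exact hlim.congr fun τ => (distrib_eq_restrict a f τ).symm

lemma rearr_nonneg (a : ℝ) (f : ℝ → E) (t : ℝ) : 0 ≤ rearr a f t :=
  Real.sInf_nonneg fun _ hτ => hτ.1

lemma nonempty_distrib_le_ofReal (hf : AEStronglyMeasurable f (volume.restrict (Icc 0 a))) {t : ℝ}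
    (ht : 0 < t) : {τ : ℝ | 0 ≤ τ ∧ distrib a f τ ≤ ENNReal.ofReal t}.Nonempty :=
  (((tendsto_distrib_atTop hf).eventually (gt_mem_nhds (ENNReal.ofReal_pos.2 ht))).and
    (eventually_ge_atTop 0)).exists.imp fun _ hτ => ⟨hτ.2, hτ.1.le⟩

lemma rearr_antitoneOn (hf : AEStronglyMeasurable f (volume.restrict (Icc 0 a))) :
    AntitoneOn (rearr a f) (Ioi 0) := fun _ ht _ _ htt' =>
  csInf_le_csInf ⟨0, fun _ hτ => hτ.1⟩ (nonempty_distrib_le_ofReal hf ht)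
    fun _ hτ => ⟨hτ.1, hτ.2.trans (ENNReal.ofReal_le_ofReal htt')⟩

lemma lt_rearr_of_ofReal_lt_distrib (hf : AEStronglyMeasurable f (volume.restrict (Icc 0 a)))
    {t τ : ℝ} (ht : 0 < t) (hτ : ENNReal.ofReal t < distrib a f τ) : τ < rearr a f t := by
  obtain ⟨σ, hστ, hσ⟩ := exists_gt_lt_distrib hτ
  refine hστ.trans_le (le_csInf (nonempty_distrib_le_ofReal hf ht) fun ρ hρ => ?_)
  by_contra! hρσ
  exact (hσ.trans_le ((distrib_antitone a f hρσ.le).trans hρ.2)).false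

lemma distrib_le_volume_superlevel (hf : AEStronglyMeasurable f (volume.restrict (Icc 0 a)))
    (τ : ℝ) : distrib a f τ ≤ volume ({t | τ < rearr a f t} ∩ Ioc 0 a) := by
  set L := distrib a f τ
  have hLa : L ≤ ENNReal.ofReal a := distrib_le_ofReal a f τ
  have hL : L ≠ ⊤ := ne_top_of_le_ne_top ENNReal.ofReal_ne_top hLa
  have hsub : Ioo 0 L.toReal ⊆ {t | τ < rearr a f t} ∩ Ioc 0 a := fun t ⟨ht0, htL⟩ => by
    have htL' : ENNReal.ofReal t < L := (ENNReal.ofReal_lt_iff_lt_toReal ht0.le hL).2 htL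
    exact ⟨lt_rearr_of_ofReal_lt_distrib hf ht0 htL', ht0,
      (ENNReal.ofReal_lt_ofReal_iff'.1 (htL'.trans_le hLa)).1.le⟩
  calc L = volume (Ioo 0 L.toReal) := by rw [Real.volume_Ioo, sub_zero, ENNReal.ofReal_toReal hL]
    _ ≤ _ := measure_mono hsub

end Rearrangement

lemma clampIcc_of_mem {a t : ℝ} (ht : t ∈ Icc 0 a) : clampIcc a t = t := by
  rw [clampIcc, max_eq_left ht.1, min_eq_left ht.2]

section Stieltjes

variable {φ : ℝ → ℝ} {a : ℝ}

lemma stieltjesOfOn_apply (ha : 0 ≤ a) (hmono : MonotoneOn φ (Icc 0 a))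
    (hcont : ContinuousOn φ (Icc 0 a)) (t : ℝ) : stieltjesOfOn φ a t = φ (clampIcc a t) := by
  rw [stieltjesOfOn, dif_pos ⟨ha, hmono, hcont⟩]

lemma stieltjesOfOn_measure_Ioo (ha : 0 ≤ a) (hmono : MonotoneOn φ (Icc 0 a))
    (hcont : ContinuousOn φ (Icc 0 a)) (hφ0 : φ 0 = 0) {s : ℝ} (hs : s ∈ Icc 0 a) :
    (stieltjesOfOn φ a).measure (Ioo 0 s) = ENNReal.ofReal (φ s) := by
  have happly := stieltjesOfOn_apply ha hmono hcont
  have hcont' : Continuous (stieltjesOfOn φ a) := by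
    rw [funext happly]
    exact hcont.comp_continuous (clampIcc_continuous a) fun t => clampIcc_mem a t ha
  rw [StieltjesFunction.measure_Ioo,
    leftLim_eq_of_tendsto (hcont'.tendsto s |>.mono_left nhdsWithin_le_nhds), happly, happly,
    clampIcc_of_mem hs, clampIcc_of_mem ⟨le_rfl, ha⟩, hφ0, sub_zero]

lemma div_le_of_concaveOn (ha : 0 < a) (hconc : ConcaveOn ℝ (Icc 0 a) φ) (hφ0 : φ 0 = 0)
    (hφa : φ a = 1) {s : ℝ} (hs : s ∈ Icc 0 a) : s / a ≤ φ s := by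
  have hsa : s / a ≤ 1 := (div_le_one ha).2 hs.2
  have hchord := hconc.2 (⟨le_rfl, ha.le⟩ : (0 : ℝ) ∈ Icc 0 a) (⟨ha.le, le_rfl⟩ : a ∈ Icc 0 a)
    (sub_nonneg.2 hsa) (div_nonneg hs.1 ha.le) (sub_add_cancel 1 (s / a))
  simp only [smul_eq_mul, mul_zero, zero_add, div_mul_cancel₀ s ha.ne', hφ0, hφa] at hchord
  linarith

lemma volume_le_ofReal_mul_stieltjesOfOn_measure (ha : 0 < a)
    (hconc : ConcaveOn ℝ (Icc 0 a) φ) (hmono : MonotoneOn φ (Icc 0 a))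
    (hcont : ContinuousOn φ (Icc 0 a)) (hφ0 : φ 0 = 0) (hφa : φ a = 1) {S : Set ℝ}
    (hSa : S ⊆ Ioc 0 a) (hS : ∀ t ∈ S, Ioc 0 t ⊆ S) :
    volume S ≤ ENNReal.ofReal a * (stieltjesOfOn φ a).measure S := by
  rcases S.eq_empty_or_nonempty with rfl | ⟨x, hx⟩
  · simp
  have hbdd : BddAbove S := bddAbove_Ioc.mono hSa
  set s := sSup S
  have hs : s ∈ Icc 0 a :=
    ⟨(hSa hx).1.le.trans (le_csSup hbdd hx), csSup_le ⟨x, hx⟩ fun y hy => (hSa hy).2⟩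
  have hIoo : Ioo 0 s ⊆ S := fun t ⟨ht0, hts⟩ => by
    obtain ⟨u, hu, htu⟩ := exists_lt_of_lt_csSup ⟨x, hx⟩ hts
    exact hS u hu ⟨ht0, htu.le⟩
  calc volume S ≤ volume (Ioc 0 s) := measure_mono fun y hy => ⟨(hSa hy).1, le_csSup hbdd hy⟩
    _ = ENNReal.ofReal a * ENNReal.ofReal (s / a) := by
      rw [Real.volume_Ioc, sub_zero, ← ENNReal.ofReal_mul ha.le, mul_div_cancel₀ _ ha.ne']
    _ ≤ ENNReal.ofReal a * ENNReal.ofReal (φ s) := by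
      gcongr
      exact div_le_of_concaveOn ha hconc hφ0 hφa hs
    _ = ENNReal.ofReal a * (stieltjesOfOn φ a).measure (Ioo 0 s) := by
      rw [stieltjesOfOn_measure_Ioo ha.le hmono hcont hφ0 hs]
    _ ≤ ENNReal.ofReal a * (stieltjesOfOn φ a).measure S := by
      gcongr

theorem lintegral_enorm_le_mul_eLorentzNorm {E : Type*} [NormedAddCommGroup E] {f : ℝ → E}
    (ha : 0 < a) (hconc : ConcaveOn ℝ (Icc 0 a) φ) (hmono : MonotoneOn φ (Icc 0 a))
    (hcont : ContinuousOn φ (Icc 0 a)) (hφ0 : φ 0 = 0) (hφa : φ a = 1)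
    (hf : AEStronglyMeasurable f (volume.restrict (Icc 0 a))) :
    ∫⁻ s in Icc 0 a, ‖f s‖ₑ ≤ ENNReal.ofReal a * eLorentzNorm φ a f := by
  have hanti := rearr_antitoneOn hf
  have hlayer_f : ∫⁻ s in Icc 0 a, ‖f s‖ₑ = ∫⁻ τ in Ioi 0, distrib a f τ := by
    simp_rw [← ofReal_norm, distrib_eq_restrict]
    exact lintegral_eq_lintegral_meas_lt _ (ae_of_all _ fun _ => norm_nonneg _)
      hf.norm.aemeasurable
  have hlayer_rearr : eLorentzNorm φ a f = ∫⁻ τ in Ioi 0,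
      (stieltjesOfOn φ a).measure ({t | τ < rearr a f t} ∩ Ioc 0 a) := by
    rw [eLorentzNorm, lintegral_eq_lintegral_meas_lt _ (ae_of_all _ (rearr_nonneg a f))
      (aemeasurable_restrict_of_antitoneOn measurableSet_Ioc (hanti.mono Ioc_subset_Ioi_self))]
    simp_rw [Measure.restrict_apply' measurableSet_Ioc]
  rw [hlayer_f, hlayer_rearr, ← lintegral_const_mul' _ _ ENNReal.ofReal_ne_top]
  refine lintegral_mono fun τ => (distrib_le_volume_superlevel hf τ).trans ?_
  exact volume_le_ofReal_mul_stieltjesOfOn_measure ha hconc hmono hcont hφ0 hφa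
    inter_subset_right fun t ht u hu =>
      ⟨ht.1.trans_le (hanti hu.1 ht.2.1 hu.2), hu.1, hu.2.trans ht.2.2⟩

end Stieltjes

section FiniteMeasure

variable {α : Type*} [MeasurableSpace α] {μ : Measure α} {h : α → ℝ}

lemma integral_nonpos_of_lintegral_enorm_one_add_le [IsFiniteMeasure μ] (hh : Integrable h μ)
    (hle : ∫⁻ x, ‖1 + h x‖ₑ ∂μ ≤ μ univ) : ∫ x, h x ∂μ ≤ 0 := by
  have : μ.real univ + ∫ x, h x ∂μ ≤ μ.real univ :=
    calc μ.real univ + ∫ x, h x ∂μ = ∫ x, 1 + h x ∂μ := by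
          rw [integral_add (integrable_const 1) hh, integral_const, smul_eq_mul, mul_one]
      _ ≤ ∫ x, ‖1 + h x‖ ∂μ := (Real.le_norm_self _).trans (norm_integral_le_integral_norm _)
      _ = (∫⁻ x, ‖1 + h x‖ₑ ∂μ).toReal :=
          integral_norm_eq_lintegral_enorm (aestronglyMeasurable_const.add hh.1)
      _ ≤ μ.real univ := ENNReal.toReal_mono (measure_ne_top _ _) hle
  linarith

lemma integral_eq_zero_of_lintegral_enorm_one_add_le_of_one_sub_le [IsFiniteMeasure μ]
    (hh : Integrable h μ) (hplus : ∫⁻ x, ‖1 + h x‖ₑ ∂μ ≤ μ univ)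
    (hminus : ∫⁻ x, ‖1 - h x‖ₑ ∂μ ≤ μ univ) : ∫ x, h x ∂μ = 0 := by
  simp_rw [sub_eq_add_neg] at hminus
  have := integral_nonpos_of_lintegral_enorm_one_add_le (h := fun x => -h x) hh.neg hminus
  rw [integral_neg] at this
  linarith [integral_nonpos_of_lintegral_enorm_one_add_le hh hplus]

lemma measure_neg_pos_of_integral_eq_zero (hh : Integrable h μ) (h0 : ∫ x, h x ∂μ = 0)
    (hne : ¬ h =ᵐ[μ] 0) : 0 < μ {x | h x < 0} := by
  refine pos_iff_ne_zero.2 fun hnull => hne ?_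
  have hnonneg : 0 ≤ᵐ[μ] h := by
    simpa only [EventuallyLE, ae_iff, not_le, Pi.zero_apply] using hnull
  exact (integral_eq_zero_iff_of_nonneg_ae hnonneg hh).1 h0

lemma measure_lt_measure_univ_of_disjoint [IsFiniteMeasure μ] {s t : Set α} (hst : Disjoint s t)
    (ht : MeasurableSet t) (ht0 : 0 < μ t) : μ s < μ univ :=
  calc μ s < μ s + μ t := ENNReal.lt_add_right (measure_ne_top μ s) ht0.ne'
    _ = μ (s ∪ t) := (measure_union hst ht).symm
    _ ≤ μ univ := measure_mono (subset_univ _)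

end FiniteMeasure

lemma volume_posSet (a : ℝ) (h : ℝ → ℝ) :
    volume (posSet a h) = volume.restrict (Icc 0 a) {t | 0 < h t} := by
  rw [Measure.restrict_apply' measurableSet_Icc, inter_comm]
  rfl

lemma volume_negSet (a : ℝ) (h : ℝ → ℝ) :
    volume (negSet a h) = volume.restrict (Icc 0 a) {t | h t < 0} := by
  rw [Measure.restrict_apply' measurableSet_Icc, inter_comm]
  rfl

theorem pos_neg_sets_nondegenerate_general (a : ℝ) (ha : 0 < a) (φ : ℝ → ℝ)
    (hconc : ConcaveOn ℝ (Set.Icc 0 a) φ)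
    (hcont : ContinuousOn φ (Set.Icc 0 a))
    (hmono : StrictMonoOn φ (Set.Icc 0 a))
    (hφ0 : φ 0 = 0) (hφa : φ a = 1)
    (h : ℝ → ℝ) (hm : Measurable h)
    (hne : ¬ (h =ᵐ[volume.restrict (Set.Icc (0:ℝ) a)] 0))
    (hplus : eLorentzNorm φ a (fun t => 1 + h t) = 1)
    (hminus : eLorentzNorm φ a (fun t => 1 - h t) = 1) :
    (0 < volume (posSet a h) ∧ volume (posSet a h) < ENNReal.ofReal a) ∧
    (0 < volume (negSet a h) ∧ volume (negSet a h) < ENNReal.ofReal a) := by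
  set ν := volume.restrict (Icc (0:ℝ) a)
  have hν : ν univ = ENNReal.ofReal a := by
    rw [Measure.restrict_apply_univ, Real.volume_Icc, sub_zero]
  have hL1 (f : ℝ → ℝ) (hf : Measurable f) (hf1 : eLorentzNorm φ a f = 1) :
      ∫⁻ t, ‖f t‖ₑ ∂ν ≤ ν univ := by
    simpa [hν, hf1] using lintegral_enorm_le_mul_eLorentzNorm ha hconc hmono.monotoneOn hcont
      hφ0 hφa hf.aestronglyMeasurable
  have hplus' := hL1 (fun t => 1 + h t) (measurable_const.add hm) hplus
  have hint : Integrable h ν := integrable_const_add_iff.1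
    ⟨(measurable_const.add hm).aestronglyMeasurable,
      hasFiniteIntegral_iff_enorm.2 (hplus'.trans_lt (measure_lt_top ν univ))⟩
  have hzero := integral_eq_zero_of_lintegral_enorm_one_add_le_of_one_sub_le hint hplus'
    (hL1 (fun t => 1 - h t) (measurable_const.sub hm) hminus)
  have hneg := measure_neg_pos_of_integral_eq_zero hint hzero hne
  have hpos : 0 < ν {t | 0 < h t} := by
    simpa using measure_neg_pos_of_integral_eq_zero hint.neg (by simp [integral_neg, hzero])
      fun hz => hne (by simpa using hz.neg)
  have hdisj : Disjoint {t | 0 < h t} {t | h t < 0} :=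
    disjoint_left.2 fun t (hp : 0 < h t) hn => hn.not_gt hp
  rw [volume_posSet, volume_negSet, ← hν]
  exact ⟨⟨hpos, measure_lt_measure_univ_of_disjoint hdisj (measurableSet_lt hm measurable_const)
    hneg⟩, hneg, measure_lt_measure_univ_of_disjoint hdisj.symm
    (measurableSet_lt measurable_const hm) hpos⟩

/-- Let `φ` be a nonlinear, strictly increasing, concave, continuous
function on `[0,a]` with `φ 0 = 0`, `φ a = 1`.  If `h` is measurable, `|h| ≤ 1` a.e.,
`h` is not a.e. zero, and `‖1 + h‖_{Λ(φ)} = ‖1 − h‖_{Λ(φ)} = 1`, then both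
`{h > 0}` and `{h < 0}` have measure strictly between `0` and `a`. -/
theorem pos_neg_sets_nondegenerate (a : ℝ) (ha : 0 < a) (φ : ℝ → ℝ)
    (hconc : ConcaveOn ℝ (Set.Icc 0 a) φ)
    (hcont : ContinuousOn φ (Set.Icc 0 a))
    (hmono : StrictMonoOn φ (Set.Icc 0 a))
    (hφ0 : φ 0 = 0) (hφa : φ a = 1)
    (hnonlin : ¬ ∀ t ∈ Set.Icc (0:ℝ) a, φ t = t / a)
    (h : ℝ → ℝ) (hm : Measurable h)
    (hb : ∀ᵐ t ∂(volume.restrict (Set.Icc (0:ℝ) a)), |h t| ≤ 1)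
    (hne : ¬ (h =ᵐ[volume.restrict (Set.Icc (0:ℝ) a)] 0))
    (hplus : eLorentzNorm φ a (fun t => 1 + h t) = 1)
    (hminus : eLorentzNorm φ a (fun t => 1 - h t) = 1) :
    (0 < volume (posSet a h) ∧ volume (posSet a h) < ENNReal.ofReal a) ∧
    (0 < volume (negSet a h) ∧ volume (negSet a h) < ENNReal.ofReal a) :=
  pos_neg_sets_nondegenerate_general a ha φ hconc hcont hmono hφ0 hφa h hm hne hplus hminus
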